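/- arXiv:1611.00829 — 6 statements merged into one kernel-verified Lean document; each statement's English description precedes it below -/
import Mathlib

section
/- If K ⊂ ℝ^d is a convex body such that w(K, u) ≥ δ for every unit vector u, where δ > 0, then K contains a closed Euclidean ball of diameter δ/d (that is, of radius δ/(2d)). -/
open MeasureTheory Set RealInnerProductSpace

/-- The directional width of a set `K` along a direction `u`. -/
noncomputable def width {d : ℕ} (K : Set (EuclideanSpace ℝ (Fin d)))
    (u : EuclideanSpace ℝ (Fin d)) : ℝ :=
  sSup ((fun x => ⟪u, x⟫) '' K) - sInf ((fun x => ⟪u, x⟫) '' K)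

/-- The centroid of a set `K` in `ℝ^d`. -/
noncomputable def centroid {d : ℕ} (K : Set (EuclideanSpace ℝ (Fin d))) :
    EuclideanSpace ℝ (Fin d) :=
  (volume K).toReal⁻¹ • ∫ x in K, x

/-!
Let `r = δ / (d + 1)` and, for a unit vector `u`, let `H u` be the set of points of `K` lying at
least `r` below the supporting hyperplane of `K` with outer normal `u`. Given at most `d + 1`
directions `uᵢ`, pick `xᵢ ∈ K` minimising `⟪uᵢ, ·⟫`: their average is in `K`, and along `uᵢ` it
falls short of the maximum by at least `w(K, uᵢ) / (d + 1) ≥ r`, so it lies in every `H uᵢ`.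
By Helly's theorem for compact convex sets all the `H u` share a point `c`, and since a closed
convex set is the intersection of its supporting half-spaces, `closedBall c r ⊆ K`.
Finally `δ / (2 d) ≤ δ / (d + 1)`.
-/

open Metric Finset

variable {E : Type*} [NormedAddCommGroup E] [InnerProductSpace ℝ E] {K : Set E}

namespace IsCompact

theorem inner_le_sSup (hK : IsCompact K) (u : E) {x : E} (hx : x ∈ K) :
    ⟪u, x⟫ ≤ sSup ((fun y => ⟪u, y⟫) '' K) :=
  le_csSup (hK.image (continuous_const.inner continuous_id)).bddAbove ⟨x, hx, rfl⟩

theorem exists_inner_eq_sSup (hK : IsCompact K) (hne : K.Nonempty) (u : E) :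
    ∃ y ∈ K, ⟪u, y⟫ = sSup ((fun y => ⟪u, y⟫) '' K) :=
  (hK.image (continuous_const.inner continuous_id)).sSup_mem (hne.image _)

theorem exists_inner_eq_sInf (hK : IsCompact K) (hne : K.Nonempty) (u : E) :
    ∃ y ∈ K, ⟪u, y⟫ = sInf ((fun y => ⟪u, y⟫) '' K) :=
  (hK.image (continuous_const.inner continuous_id)).sInf_mem (hne.image _)

end IsCompact

theorem inner_centerMass_add_div_card_le {ι : Type*} {s : Finset ι} {x : ι → E} {v : E}
    {M δ : ℝ} (hM : ∀ j ∈ s, ⟪v, x j⟫ ≤ M) {i : ι} (hi : i ∈ s) (hδ : ⟪v, x i⟫ + δ ≤ M) :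
    ⟪v, s.centerMass (fun _ => (1 : ℝ)) x⟫ + δ / (#s : ℝ) ≤ M := by
  classical
  have hcard : (0 : ℝ) < #s := by exact_mod_cast card_pos.2 ⟨i, hi⟩
  have hsum : ∑ j ∈ s, ⟪v, x j⟫ + δ ≤ #s * M := by
    rw [← add_sum_erase s _ hi]
    have := sum_le_card_nsmul (s.erase i) (fun j => ⟪v, x j⟫) M
      fun j hj => hM j (mem_of_mem_erase hj)
    rw [card_erase_of_mem hi, nsmul_eq_mul, Nat.cast_pred (card_pos.2 ⟨i, hi⟩)] at this
    linarith
  simp only [centerMass, one_smul, sum_const, nsmul_eq_mul, mul_one, inner_smul_right,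
    inner_sum]
  rw [inv_mul_eq_div, ← add_div, div_le_iff₀ hcard]
  linarith

theorem closedBall_subset_of_inner_add_le_sSup [CompleteSpace E] (hK : IsCompact K)
    (hconv : Convex ℝ K) (hne : K.Nonempty) {c : E} {r : ℝ}
    (hc : ∀ u : E, ‖u‖ = 1 → ⟪u, c⟫ + r ≤ sSup ((fun y => ⟪u, y⟫) '' K)) :
    closedBall c r ⊆ K := by
  intro x hx
  rw [← iInter_halfSpaces_eq hconv hK.isClosed, mem_iInter]
  intro l
  set v := (InnerProductSpace.toDual ℝ E).symm l
  have hl : ∀ y, l y = ⟪v, y⟫ := fun y => InnerProductSpace.toDual_symm_apply.symm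
  rcases eq_or_ne v 0 with hv | hv
  · obtain ⟨y, hy⟩ := hne
    exact ⟨y, hy, by simp [hl, hv]⟩
  have hvpos : 0 < ‖v‖ := norm_pos_iff.2 hv
  set u := ‖v‖⁻¹ • v
  have hu : ‖u‖ = 1 := norm_smul_inv_norm hv
  obtain ⟨y, hy, hyu⟩ := hK.exists_inner_eq_sSup hne u
  refine ⟨y, hy, ?_⟩
  have hux : ⟪u, x⟫ ≤ ⟪u, y⟫ := calc
    ⟪u, x⟫ = ⟪u, c⟫ + ⟪u, x - c⟫ := by rw [← inner_add_right, add_sub_cancel]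
    _ ≤ ⟪u, c⟫ + r := by
      gcongr
      calc ⟪u, x - c⟫ ≤ ‖u‖ * ‖x - c‖ := real_inner_le_norm _ _
        _ ≤ r := by rwa [hu, one_mul, ← dist_eq_norm]
    _ ≤ ⟪u, y⟫ := hyu ▸ hc u hu
  simp only [u, real_inner_smul_left] at hux
  rw [hl, hl]
  exact le_of_mul_le_mul_left hux (inv_pos.2 hvpos)

theorem exists_mem_inner_add_div_card_le_sSup (hK : IsCompact K) (hconv : Convex ℝ K)
    (hne : K.Nonempty) {ι : Type*} {s : Finset ι} (hs : s.Nonempty) {u : ι → E} {δ : ℝ}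
    (hw : ∀ i ∈ s, δ ≤ sSup ((fun y => ⟪u i, y⟫) '' K) - sInf ((fun y => ⟪u i, y⟫) '' K)) :
    ∃ y ∈ K, ∀ i ∈ s, ⟪u i, y⟫ + δ / (#s : ℝ) ≤ sSup ((fun y => ⟪u i, y⟫) '' K) := by
  choose x hxK hx using fun i => hK.exists_inner_eq_sInf hne (u i)
  refine ⟨s.centerMass (fun _ => (1 : ℝ)) x,
    hconv.centerMass_mem (fun _ _ => zero_le_one) (by simpa using hs) fun j _ => hxK j,
    fun i hi => ?_⟩
  exact inner_centerMass_add_div_card_le (fun j _ => hK.inner_le_sSup _ (hxK j)) hi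
    (by linarith [hw i hi, hx i])

theorem exists_closedBall_subset_of_le_width [FiniteDimensional ℝ E] (hK : IsCompact K)
    (hconv : Convex ℝ K) (hne : K.Nonempty) {δ : ℝ} (hδ : 0 ≤ δ)
    (hw : ∀ u : E, ‖u‖ = 1 →
      δ ≤ sSup ((fun y => ⟪u, y⟫) '' K) - sInf ((fun y => ⟪u, y⟫) '' K)) :
    ∃ c : E, closedBall c (δ / (Module.finrank ℝ E + 1)) ⊆ K := by
  set r := δ / (Module.finrank ℝ E + 1)
  let F : sphere (0 : E) 1 → Set E := fun u =>
    K ∩ {c | ⟪(u : E), c⟫ ≤ sSup ((fun y => ⟪(u : E), y⟫) '' K) - r}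
  have hinter (I : Finset (sphere (0 : E) 1)) (hI : #I ≤ Module.finrank ℝ E + 1) :
      (⋂ u ∈ I, F u).Nonempty := by
    rcases I.eq_empty_or_nonempty with rfl | hIne
    · simp
    obtain ⟨y, hyK, hy⟩ := exists_mem_inner_add_div_card_le_sSup hK hconv hne hIne
      (u := (↑)) fun u _ => hw u (by simp)
    have hr : r ≤ δ / #I := div_le_div_of_nonneg_left hδ (by exact_mod_cast card_pos.2 hIne)
      (by exact_mod_cast hI)
    exact ⟨y, mem_iInter₂.2 fun u hu => ⟨hyK, show ⟪(u : E), y⟫ ≤ _ - r by linarith [hy u hu]⟩⟩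
  obtain ⟨c, hc⟩ := Convex.helly_theorem_compact' (𝕜 := ℝ) (F := F)
    (fun u => hconv.inter (convex_halfSpace_le (innerₛₗ ℝ (u : E)).isLinear _))
    (fun u => hK.inter_right (isClosed_le (continuous_const.inner continuous_id) continuous_const))
    hinter
  refine ⟨c, closedBall_subset_of_inner_add_le_sSup hK hconv hne fun u hu => ?_⟩
  exact le_sub_iff_add_le.1 (mem_iInter.1 hc ⟨u, by simpa using hu⟩).2

/-- If every directional width of a convex body `K ⊆ ℝ^d` is at least `δ > 0`, then `K`
contains a closed ball of diameter `δ/d`, i.e. of radius `δ/(2d)`. -/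
theorem contains_ball_of_width {d : ℕ} (K : Set (EuclideanSpace ℝ (Fin d)))
    (hKcompact : IsCompact K) (hKconv : Convex ℝ K) (hKint : (interior K).Nonempty)
    (δ : ℝ) (hδ : 0 < δ)
    (hw : ∀ u : EuclideanSpace ℝ (Fin d), ‖u‖ = 1 → δ ≤ width K u) :
    ∃ c : EuclideanSpace ℝ (Fin d), Metric.closedBall c (δ / (2 * d)) ⊆ K := by
  have hr : δ / (2 * d) ≤ δ / (d + 1) := by
    rcases Nat.eq_zero_or_pos d with rfl | hd
    · simp only [CharP.cast_eq_zero, mul_zero, div_zero]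
      positivity
    · refine div_le_div_of_nonneg_left hδ.le (by positivity) ?_
      have : (1 : ℝ) ≤ d := by exact_mod_cast hd
      linarith
  obtain ⟨c, hc⟩ := exists_closedBall_subset_of_le_width hKcompact hKconv
    (hKint.mono interior_subset) hδ.le hw
  rw [finrank_euclideanSpace_fin] at hc
  exact ⟨c, (closedBall_subset_closedBall hr).trans hc⟩
end

section
/- If K ⊂ ℝ^k is a convex body such that w(K, u) ≥ δ for every unit vector u, where δ > 0, then vol(K) ≥ γ_k·(δ/(2k))^k, where γ_k is the volume of the k-dimensional unit ball. -/
open MeasureTheory Set RealInnerProductSpace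

/-!
Greedily choose points of `K`: a base point `x₀` and `x₀ + v₀` realising the width in some
direction (so `|⟪u₀, v₀⟫| ≥ δ`), then, for each `i ≥ 1`, a point `x₀ + vᵢ` lying at distance
`≥ δ/2` from `x₀` along a unit direction `uᵢ` orthogonal to `v₀, …, vᵢ₋₁` (one of the two
extreme points in that direction will do). The matrix `⟪uᵢ, vⱼ⟫` is triangular, and comparing
with the Gram–Schmidt basis of `v` gives `|det v| ≥ δ (δ/2)^(k-1)`. The simplex spanned by these
points lies in `K` and has volume `|det v| / k!`, which beats `γ_k (δ/2k)^k` because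
`γ_k ≤ 2^k` and `k! 2^(k-1) ≤ k^k`.
-/

open InnerProductSpace
open scoped Nat

theorem Fin.exists_forall_of_forall_exists {α : Type*} (P : ∀ n : ℕ, (Fin n → α) → α → Prop) :
    ∀ k : ℕ, (∀ n < k, ∀ v : Fin n → α, ∃ a, P n v a) →
      ∃ v : Fin k → α, ∀ i : Fin k, P i (fun j => v (Fin.castLE i.is_lt.le j)) (v i)
  | 0, _ => ⟨Fin.elim0, fun i => i.elim0⟩
  | k + 1, h => by
    obtain ⟨v, hv⟩ := Fin.exists_forall_of_forall_exists P k fun n hn => h n (by omega)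
    obtain ⟨a, ha⟩ := h k (by omega) v
    have hsnoc : ∀ n (hn : n ≤ k) (j : Fin n),
        Fin.snoc (α := fun _ => α) v a (Fin.castLE (hn.trans k.le_succ) j) = v (Fin.castLE hn j) :=
      fun n hn j => Fin.snoc_castSucc (α := fun _ => α) (p := v) (x := a) (Fin.castLE hn j)
    refine ⟨Fin.snoc v a, Fin.lastCases ?_ fun i => ?_⟩
    · simpa [Fin.snoc_last, hsnoc k le_rfl] using ha
    · simpa [hsnoc i i.is_lt.le] using hv i

lemma Nat.succ_factorial_mul_two_pow_le (n : ℕ) : (n + 1)! * 2 ^ n ≤ (n + 1) ^ (n + 1) := by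
  induction n with
  | zero => simp
  | succ n ih =>
    have bernoulli : 2 * (n + 1) ^ (n + 1) ≤ (n + 2) ^ (n + 1) :=
      calc 2 * (n + 1) ^ (n + 1) = (n + 1) ^ (n + 1) + (n + 1) * (n + 1) ^ n * 1 := by ring
        _ ≤ (n + 2) ^ (n + 1) := by
          simpa using
            pow_add_mul_le_add_pow (a := n + 1) (b := 1) (by positivity) (by omega) (n + 1)
    calc (n + 2)! * 2 ^ (n + 1) = (n + 2) * ((n + 1)! * 2 ^ n * 2) := by
          rw [Nat.factorial_succ, pow_succ]; ring
      _ ≤ (n + 2) * ((n + 1) ^ (n + 1) * 2) := by gcongr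
      _ ≤ (n + 2) * (n + 2) ^ (n + 1) := by gcongr; omega
      _ = (n + 1 + 1) ^ (n + 1 + 1) := by ring

lemma factorial_mul_div_pow_le_prod {δ : ℝ} (hδ : 0 ≤ δ) (k : ℕ) :
    k ! * (2 ^ k * (δ / (2 * k)) ^ k) ≤ ∏ i : Fin k, if (i : ℕ) = 0 then δ else δ / 2 := by
  cases k with
  | zero => simp
  | succ m =>
    have hfac : ((m + 1)! * 2 ^ m : ℝ) ≤ (m + 1) ^ (m + 1) := by
      exact_mod_cast Nat.succ_factorial_mul_two_pow_le m
    rw [Fin.prod_univ_succ]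
    simp only [Fin.val_zero, Fin.val_succ, if_true, Nat.succ_ne_zero, if_false,
      Finset.prod_const, Finset.card_univ, Fintype.card_fin]
    rw [show (2 : ℝ) ^ (m + 1) * (δ / (2 * ↑(m + 1))) ^ (m + 1) = δ ^ (m + 1) / (m + 1) ^ (m + 1) by
        push_cast; rw [← mul_pow, ← div_pow]; congr 1; field_simp,
      show δ * (δ / 2) ^ m = δ ^ (m + 1) / 2 ^ m by rw [div_pow, pow_succ']; ring,
      ← mul_div_assoc, div_le_div_iff₀ (by positivity) (by positivity)]
    calc _ = δ ^ (m + 1) * ((m + 1)! * 2 ^ m : ℝ) := by ring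
      _ ≤ δ ^ (m + 1) * (m + 1) ^ (m + 1) := by gcongr

def solidSimplex (ι : Type*) [Fintype ι] : Set (ι → ℝ) :=
  {y | (∀ i, 0 ≤ y i) ∧ ∑ i, y i ≤ 1}

lemma isClosed_solidSimplex (ι : Type*) [Fintype ι] : IsClosed (solidSimplex ι) := by
  have h₁ : IsClosed {y : ι → ℝ | ∀ i, 0 ≤ y i} := by
    rw [Set.ofPred_forall]
    exact isClosed_iInter fun i => isClosed_le continuous_const (continuous_apply i)
  exact h₁.inter
    (isClosed_le (continuous_finsetSum _ fun i _ => continuous_apply i) continuous_const)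

lemma volume_sum_abs_le_one (ι : Type*) [Fintype ι] [Nonempty ι] :
    volume {x : ι → ℝ | ∑ i, |x i| ≤ 1} =
      ENNReal.ofReal (2 ^ Fintype.card ι / (Fintype.card ι)!) := by
  have := volume_sum_rpow_le ι (p := 1) le_rfl 1
  simp only [Real.rpow_one, div_one, ENNReal.ofReal_one, one_pow, one_mul] at this
  rw [this, one_add_one_eq_two, Real.Gamma_two, Real.Gamma_nat_eq_factorial, mul_one]

lemma measurePreserving_neg_coords {ι : Type*} [Fintype ι] (s : ι → Bool) :
    MeasurePreserving (fun (x : ι → ℝ) i => cond (s i) (-x i) (x i)) volume volume := by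
  refine measurePreserving_pi (fun _ => volume) (fun _ => volume)
    (f := fun i (t : ℝ) => cond (s i) (-t) t) (fun i => ?_)
  cases s i
  · exact MeasurePreserving.id volume
  · exact Measure.measurePreserving_neg volume

/-- The orthant reflections of the solid simplex cover the cross-polytope, whose volume is known. -/
lemma ofReal_inv_factorial_le_volume_solidSimplex (ι : Type*) [Fintype ι] :
    ENNReal.ofReal (1 / (Fintype.card ι)!) ≤ volume (solidSimplex ι) := by
  classical
  rcases isEmpty_or_nonempty ι with hι | hι
  · simp [solidSimplex, Measure.volume_pi_eq_dirac 0]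
  have hcover : {x : ι → ℝ | ∑ i, |x i| ≤ 1} ⊆
      ⋃ s : ι → Bool, (fun x i => cond (s i) (-x i) (x i)) ⁻¹' solidSimplex ι := by
    intro x hx
    have habs : ∀ i, cond (decide (x i < 0)) (-x i) (x i) = |x i| := fun i => by
      by_cases h : x i < 0 <;> simp [h, abs_of_neg, abs_of_nonneg, le_of_not_gt]
    refine mem_iUnion.2 ⟨fun i => decide (x i < 0), ?_⟩
    simpa only [mem_preimage, solidSimplex, mem_ofPred_eq, habs, abs_nonneg, implies_true,
      true_and] using hx
  have hmeas : NullMeasurableSet (solidSimplex ι) :=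
    (isClosed_solidSimplex ι).measurableSet.nullMeasurableSet
  have key : ENNReal.ofReal (2 ^ Fintype.card ι / (Fintype.card ι)!)
      ≤ 2 ^ Fintype.card ι * volume (solidSimplex ι) :=
    calc _ = volume {x : ι → ℝ | ∑ i, |x i| ≤ 1} := (volume_sum_abs_le_one ι).symm
      _ ≤ ∑ s : ι → Bool,
            volume ((fun (x : ι → ℝ) i => cond (s i) (-x i) (x i)) ⁻¹' solidSimplex ι) :=
        (measure_mono hcover).trans (measure_iUnion_fintype_le _ _)
      _ = 2 ^ Fintype.card ι * volume (solidSimplex ι) := by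
        simp [(measurePreserving_neg_coords _).measure_preimage hmeas]
  rw [div_eq_mul_one_div, ENNReal.ofReal_mul (by positivity), ENNReal.ofReal_pow zero_le_two,
    ENNReal.ofReal_ofNat] at key
  exact (ENNReal.mul_le_mul_iff_right (by simp) (by simp)).1 key

lemma Convex.add_sum_smul_mem {ι E : Type*} [Fintype ι] [AddCommGroup E] [Module ℝ E]
    {K : Set E} (hK : Convex ℝ K) {x₀ : E} (hx₀ : x₀ ∈ K) {v : ι → E}
    (hv : ∀ i, x₀ + v i ∈ K) {y : ι → ℝ} (hy : y ∈ solidSimplex ι) :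
    x₀ + ∑ i, y i • v i ∈ K := by
  have hmem := hK.sum_mem (t := Finset.univ) (w := fun o : Option ι => o.elim (1 - ∑ i, y i) y)
    (z := fun o => o.elim x₀ (x₀ + v ·)) (by simpa [Option.forall] using ⟨hy.2, hy.1⟩)
    (by simp [Fintype.sum_option]) (by simpa [Option.forall] using ⟨hx₀, hv⟩)
  convert hmem using 1
  simp only [Fintype.sum_option, Option.elim, smul_add, Finset.sum_add_distrib, ← Finset.sum_smul]
  module

lemma volume_image_add_sum_smul {ι E : Type*} [Fintype ι] [DecidableEq ι] [NormedAddCommGroup E]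
    [InnerProductSpace ℝ E] [FiniteDimensional ℝ E] [MeasurableSpace E] [BorelSpace E]
    (b : OrthonormalBasis ι ℝ E) (x₀ : E) (v : ι → E) (s : Set (ι → ℝ)) :
    volume ((fun y => x₀ + ∑ i, y i • v i) '' s) =
      ENNReal.ofReal |b.toBasis.det v| * volume s := by
  set e : (ι → ℝ) ≃ᵐ E := (MeasurableEquiv.toLp 2 (ι → ℝ)).trans b.measurableEquiv.symm
  have he : MeasurePreserving e := (PiLp.volume_preserving_toLp ι).trans
    b.measurePreserving_measurableEquiv.symm
  set T : E →ₗ[ℝ] E := b.toBasis.constr ℝ v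
  have hT : ∀ y, ∑ i, y i • v i = T (e y) := fun y => by
    simp [T, e, Module.Basis.constr_apply_fintype, OrthonormalBasis.measurableEquiv]
  have hdet : LinearMap.det T = b.toBasis.det v := by
    have : v = T ∘ b.toBasis := by ext i; simp [T]
    rw [this, Module.Basis.det_comp, Module.Basis.det_self, mul_one]
  have himage : (fun y => x₀ + ∑ i, y i • v i) '' s = (x₀ + ·) '' (T '' (e '' s)) := by
    simp only [image_image, hT]
  rw [himage, image_add_left, measure_preimage_add, Measure.addHaar_image_linearMap, hdet,
    MeasurableEquiv.image_eq_preimage_symm, he.symm.measure_preimage_equiv]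

lemma EuclideanSpace.volume_closedBall_le {ι : Type*} [Fintype ι] (x : EuclideanSpace ℝ ι)
    {r : ℝ} (hr : 0 ≤ r) :
    volume (Metric.closedBall x r) ≤ ENNReal.ofReal ((2 * r) ^ Fintype.card ι) :=
  calc volume (Metric.closedBall x r)
      ≤ volume (WithLp.ofLp ⁻¹' Metric.closedBall (WithLp.ofLp x) r) := measure_mono fun y hy =>
        (dist_pi_le_iff hr).2 fun i => (PiLp.dist_apply_le y x i).trans (Metric.mem_closedBall.1 hy)
    _ = volume (Metric.closedBall (WithLp.ofLp x) r) :=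
        (PiLp.volume_preserving_ofLp ι).measure_preimage measurableSet_closedBall.nullMeasurableSet
    _ = ENNReal.ofReal ((2 * r) ^ Fintype.card ι) := Real.volume_pi_closedBall _ hr

section GramSchmidt

variable {𝕜 E ι : Type*} [RCLike 𝕜] [NormedAddCommGroup E] [InnerProductSpace 𝕜 E]
  [LinearOrder ι] [LocallyFiniteOrderBot ι] [WellFoundedLT ι]

open Submodule

lemma sub_gramSchmidt_mem_span (v : ι → E) (i : ι) :
    v i - gramSchmidt 𝕜 v i ∈ span 𝕜 (v '' Iio i) := by
  rw [← span_gramSchmidt_Iio 𝕜 v i, gramSchmidt_def'' 𝕜 v i, add_sub_cancel_left]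
  exact sum_mem fun j hj =>
    smul_mem _ _ (subset_span (mem_image_of_mem _ (Finset.mem_Iio.1 hj)))

lemma inner_gramSchmidt_eq_of_orthogonal {v : ι → E} {i : ι} {u : E}
    (hu : ∀ j < i, inner 𝕜 u (v j) = 0) :
    inner 𝕜 u (gramSchmidt 𝕜 v i) = inner 𝕜 u (v i) := by
  have hspan : span 𝕜 (v '' Iio i) ≤ (𝕜 ∙ u)ᗮ := by
    rw [span_le]
    rintro _ ⟨j, hj, rfl⟩
    exact mem_orthogonal_singleton_iff_inner_right.2 (hu j hj)
  have := mem_orthogonal_singleton_iff_inner_right.1 (hspan (sub_gramSchmidt_mem_span v i))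
  rwa [inner_sub_right, sub_eq_zero, eq_comm] at this

variable [Fintype ι] [FiniteDimensional 𝕜 E] (h : Module.finrank 𝕜 E = Fintype.card ι)

lemma inner_gramSchmidtOrthonormalBasis_self (v : ι → E) (i : ι) :
    inner 𝕜 (gramSchmidtOrthonormalBasis h v i) (v i) = ‖gramSchmidt 𝕜 v i‖ := by
  rw [← inner_gramSchmidt_eq_of_orthogonal fun j hj =>
    gramSchmidtOrthonormalBasis_inv_triangular h v hj]
  by_cases hg : gramSchmidt 𝕜 v i = 0
  · simp [hg]
  have hn : gramSchmidtNormed 𝕜 v i ≠ 0 := by simp [gramSchmidtNormed, hg]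
  rw [gramSchmidtOrthonormalBasis_apply h hn, gramSchmidtNormed, inner_smul_left,
    inner_self_eq_norm_sq_to_K]
  have : (‖gramSchmidt 𝕜 v i‖ : 𝕜) ≠ 0 := by simpa using hg
  rw [RCLike.conj_inv, RCLike.conj_ofReal]
  field_simp

end GramSchmidt

lemma prod_abs_inner_le_abs_det_gramSchmidtOrthonormalBasis {ι E : Type*} [NormedAddCommGroup E]
    [InnerProductSpace ℝ E] [FiniteDimensional ℝ E] [LinearOrder ι] [LocallyFiniteOrderBot ι]
    [WellFoundedLT ι] [Fintype ι] [DecidableEq ι] (h : Module.finrank ℝ E = Fintype.card ι)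
    {u v : ι → E} (hu : ∀ i, ‖u i‖ ≤ 1) (huv : ∀ i, ∀ j < i, ⟪u i, v j⟫ = 0) :
    ∏ i, |⟪u i, v i⟫| ≤ |(gramSchmidtOrthonormalBasis h v).toBasis.det v| := by
  rw [gramSchmidtOrthonormalBasis_det, Finset.abs_prod]
  refine Finset.prod_le_prod (fun i _ => abs_nonneg _) fun i _ => ?_
  rw [inner_gramSchmidtOrthonormalBasis_self, ← inner_gramSchmidt_eq_of_orthogonal (huv i),
    RCLike.ofReal_real_eq_id, id, abs_norm]
  calc |⟪u i, gramSchmidt ℝ v i⟫| ≤ ‖u i‖ * ‖gramSchmidt ℝ v i‖ := abs_real_inner_le_norm _ _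
    _ ≤ ‖gramSchmidt ℝ v i‖ := mul_le_of_le_one_left (norm_nonneg _) (hu i)

lemma exists_unit_forall_inner_eq_zero {ι E : Type*} [Fintype ι] [NormedAddCommGroup E]
    [InnerProductSpace ℝ E] [FiniteDimensional ℝ E] (v : ι → E)
    (hι : Fintype.card ι < Module.finrank ℝ E) : ∃ u : E, ‖u‖ = 1 ∧ ∀ j, ⟪u, v j⟫ = 0 := by
  have hW : (Submodule.span ℝ (range v))ᗮ ≠ ⊥ := by
    rw [Ne, Submodule.orthogonal_eq_bot_iff]
    intro htop
    have := finrank_range_le_card (R := ℝ) v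
    rw [Set.finrank, htop, finrank_top] at this
    omega
  obtain ⟨w, hwW, hw0⟩ := Submodule.exists_mem_ne_zero_of_ne_bot hW
  refine ⟨‖w‖⁻¹ • w, norm_smul_inv_norm hw0, fun j => ?_⟩
  rw [real_inner_smul_left, real_inner_comm, Submodule.inner_right_of_mem_orthogonal
    (Submodule.subset_span (mem_range_self j)) hwW, mul_zero]

section Width

variable {d : ℕ} {K : Set (EuclideanSpace ℝ (Fin d))}

lemma IsCompact.exists_inner_sub_eq_width (hK : IsCompact K) (hne : K.Nonempty)
    (u : EuclideanSpace ℝ (Fin d)) : ∃ p ∈ K, ∃ q ∈ K, ⟪u, p⟫ - ⟪u, q⟫ = width K u := by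
  have himg : IsCompact ((fun x => ⟪u, x⟫) '' K) := hK.image (continuous_const.inner continuous_id)
  obtain ⟨p, hp, hpsup⟩ := himg.sSup_mem (hne.image _)
  obtain ⟨q, hq, hqinf⟩ := himg.sInf_mem (hne.image _)
  exact ⟨p, hp, q, hq, by rw [width, ← hpsup, ← hqinf]⟩

lemma IsCompact.exists_half_width_le_abs_inner_sub (hK : IsCompact K)
    {x₀ : EuclideanSpace ℝ (Fin d)} (hx₀ : x₀ ∈ K) (u : EuclideanSpace ℝ (Fin d)) :
    ∃ p ∈ K, width K u / 2 ≤ |⟪u, p - x₀⟫| := by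
  obtain ⟨p, hp, q, hq, hpq⟩ := hK.exists_inner_sub_eq_width ⟨x₀, hx₀⟩ u
  by_contra! hfar
  have hp' := (abs_lt.1 (hfar p hp)).2
  have hq' := (abs_lt.1 (hfar q hq)).1
  rw [inner_sub_right] at hp' hq'
  linarith

lemma IsCompact.exists_triangular_vertices (hK : IsCompact K) (hne : K.Nonempty) {δ : ℝ}
    (hw : ∀ u : EuclideanSpace ℝ (Fin d), ‖u‖ = 1 → δ ≤ width K u) :
    ∃ x₀ ∈ K, ∃ v u : Fin d → EuclideanSpace ℝ (Fin d), (∀ i, x₀ + v i ∈ K) ∧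
      (∀ i, ‖u i‖ = 1) ∧ (∀ i, ∀ j < i, ⟪u i, v j⟫ = 0) ∧
      ∀ i : Fin d, (if (i : ℕ) = 0 then δ else δ / 2) ≤ |⟪u i, v i⟫| := by
  rcases Nat.eq_zero_or_pos d with rfl | hd
  · obtain ⟨x₀, hx₀⟩ := hne
    exact ⟨x₀, hx₀, 0, 0, by simp, by simp, by simp, by simp⟩
  set e : EuclideanSpace ℝ (Fin d) := EuclideanSpace.single ⟨0, hd⟩ 1
  have he : ‖e‖ = 1 := by simp [e]
  obtain ⟨p, hp, x₀, hx₀, hpx₀⟩ := hK.exists_inner_sub_eq_width hne e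
  obtain ⟨f, hf⟩ := Fin.exists_forall_of_forall_exists
    (fun n (w : Fin n → EuclideanSpace ℝ (Fin d) × EuclideanSpace ℝ (Fin d)) a =>
      x₀ + a.1 ∈ K ∧ ‖a.2‖ = 1 ∧ (∀ j, ⟪a.2, (w j).1⟫ = 0) ∧
        (if n = 0 then δ else δ / 2) ≤ |⟪a.2, a.1⟫|) d fun n hn w => by
    rcases eq_or_ne n 0 with rfl | hn0
    · refine ⟨(p - x₀, e), by simpa using hp, he, fun j => j.elim0, ?_⟩
      rw [if_pos rfl, inner_sub_right, hpx₀]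
      exact (hw e he).trans (le_abs_self _)
    · obtain ⟨u, hu, huw⟩ := exists_unit_forall_inner_eq_zero (fun j => (w j).1)
        (by simpa using hn)
      obtain ⟨q, hq, hqx₀⟩ := hK.exists_half_width_le_abs_inner_sub hx₀ u
      refine ⟨(q - x₀, u), by simpa using hq, hu, huw, ?_⟩
      rw [if_neg hn0]
      exact (div_le_div_of_nonneg_right (hw u hu) zero_le_two).trans hqx₀
  refine ⟨x₀, hx₀, fun i => (f i).1, fun i => (f i).2, fun i => (hf i).1, fun i => (hf i).2.1,
    fun i j hj => (hf i).2.2.1 ⟨j, hj⟩, fun i => (hf i).2.2.2⟩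

end Width

/-- If every directional width of a convex body `K ⊆ ℝ^k` is at least `δ > 0`, then
`vol(K) ≥ γ_k · (δ/(2k))^k`, where `γ_k` is the volume of the `k`-dimensional unit
ball. -/
theorem volume_lower_bound_of_width {k : ℕ} (K : Set (EuclideanSpace ℝ (Fin k)))
    (hKcompact : IsCompact K) (hKconv : Convex ℝ K) (hKint : (interior K).Nonempty)
    (δ : ℝ) (hδ : 0 < δ)
    (hw : ∀ u : EuclideanSpace ℝ (Fin k), ‖u‖ = 1 → δ ≤ width K u) :
    volume (Metric.closedBall (0 : EuclideanSpace ℝ (Fin k)) 1) *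
        ENNReal.ofReal ((δ / (2 * k)) ^ k) ≤ volume K := by
  obtain ⟨x₀, hx₀, v, u, hvK, hu, huv, hδu⟩ :=
    hKcompact.exists_triangular_vertices (hKint.mono interior_subset) hw
  have hdim : Module.finrank ℝ (EuclideanSpace ℝ (Fin k)) = Fintype.card (Fin k) := by simp
  set B := gramSchmidtOrthonormalBasis hdim v
  have hdet : (k ! : ℝ) * (2 ^ k * (δ / (2 * k)) ^ k) ≤ |B.toBasis.det v| :=
    calc _ ≤ ∏ i : Fin k, if (i : ℕ) = 0 then δ else δ / 2 := factorial_mul_div_pow_le_prod hδ.le k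
      _ ≤ ∏ i, |⟪u i, v i⟫| :=
        Finset.prod_le_prod (fun i _ => by split_ifs <;> positivity) fun i _ => hδu i
      _ ≤ _ := prod_abs_inner_le_abs_det_gramSchmidtOrthonormalBasis hdim (fun i => (hu i).le) huv
  calc volume (Metric.closedBall (0 : EuclideanSpace ℝ (Fin k)) 1) *
        ENNReal.ofReal ((δ / (2 * k)) ^ k)
      ≤ ENNReal.ofReal (2 ^ k) * ENNReal.ofReal ((δ / (2 * k)) ^ k) := by
        gcongr
        simpa using EuclideanSpace.volume_closedBall_le (0 : EuclideanSpace ℝ (Fin k)) zero_le_one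
    _ ≤ ENNReal.ofReal |B.toBasis.det v| * ENNReal.ofReal (1 / k !) := by
        rw [← ENNReal.ofReal_mul (by positivity), ← ENNReal.ofReal_mul (abs_nonneg _)]
        refine ENNReal.ofReal_le_ofReal ?_
        rw [← mul_div_assoc, mul_one, le_div_iff₀ (by positivity), mul_comm]
        exact hdet
    _ ≤ ENNReal.ofReal |B.toBasis.det v| * volume (solidSimplex (Fin k)) := by
        gcongr
        simpa using ofReal_inv_factorial_le_volume_solidSimplex (Fin k)
    _ = volume ((fun y => x₀ + ∑ i, y i • v i) '' solidSimplex (Fin k)) :=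
        (volume_image_add_sum_smul B x₀ v _).symm
    _ ≤ volume K :=
        measure_mono <| image_subset_iff.2 fun _ hy => hKconv.add_sum_smul_mem hx₀ hvK hy
end

section
/- Let K be a convex body in ℝ^d with centroid z, and let z′ be a point with ‖z − z′‖ ≤ ρ. Then for every unit vector u, the set K₊ = K ∩ {x : u⊤(x − z′) ≥ 0} satisfies, for every unit vector v, (1/(d+1))·w(K, v) − ρ·max(1, w(K, v)/w(K, u)) ≤ w(K₊, v) ≤ w(K, v). -/
open MeasureTheory Set RealInnerProductSpace

/-!
Write `b` for the maximum of `⟪u, ·⟫` on `K` and `w = w(K, u)`. The homothety of ratio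
`1 - t / w` centred at a minimiser of `⟪u, ·⟫` maps `K` into `K ∩ {⟪u, ·⟫ ≤ b - t}`, so that slab
keeps at least a fraction `(1 - t / w) ^ d` of the volume of `K`; integrating over `t` (layer cake)
gives `⟪u, z⟫ ≤ b - w / (d + 1)`, hence `b - ⟪u, z'⟫ ≥ w / (d + 1) - ρ`. The homothety of ratio
`min 1 ((b - ⟪u, z'⟫) / w)` centred at a maximiser of `⟪u, ·⟫` then maps `K` into `K₊`, and it
scales every directional width by its ratio.
-/

section Homothety

variable {F : Type*} [NormedAddCommGroup F] [InnerProductSpace ℝ F]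

lemma inner_homothety (u p x : F) (l : ℝ) :
    ⟪u, AffineMap.homothety p l x⟫ = l * ⟪u, x⟫ + (1 - l) * ⟪u, p⟫ := by
  rw [AffineMap.homothety_apply, vadd_eq_add, vsub_eq_sub, inner_add_right,
    real_inner_smul_right, inner_sub_right]
  ring

lemma Convex.mapsTo_homothety {K : Set F} (hconv : Convex ℝ K) {p : F} (hp : p ∈ K) {l : ℝ}
    (hl : l ∈ Icc (0 : ℝ) 1) : MapsTo (AffineMap.homothety p l) K K := fun _ hx => by
  rw [AffineMap.homothety_eq_lineMap]
  exact hconv.lineMap_mem hp hx hl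

end Homothety

section Width

variable {d : ℕ} {K S : Set (EuclideanSpace ℝ (Fin d))} {u v : EuclideanSpace ℝ (Fin d)}

lemma isCompact_image_inner (hK : IsCompact K) (u : EuclideanSpace ℝ (Fin d)) :
    IsCompact ((fun x => ⟪u, x⟫) '' K) :=
  hK.image (continuous_const.inner continuous_id)

lemma inner_le_sSup (hK : IsCompact K) {x : EuclideanSpace ℝ (Fin d)} (hx : x ∈ K) :
    ⟪u, x⟫ ≤ sSup ((fun x => ⟪u, x⟫) '' K) :=
  le_csSup (isCompact_image_inner hK u).bddAbove (mem_image_of_mem _ hx)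

lemma sInf_le_inner (hK : IsCompact K) {x : EuclideanSpace ℝ (Fin d)} (hx : x ∈ K) :
    sInf ((fun x => ⟪u, x⟫) '' K) ≤ ⟪u, x⟫ :=
  csInf_le (isCompact_image_inner hK u).bddBelow (mem_image_of_mem _ hx)

lemma exists_inner_eq_sSup (hK : IsCompact K) (hne : K.Nonempty) (u : EuclideanSpace ℝ (Fin d)) :
    ∃ p ∈ K, ⟪u, p⟫ = sSup ((fun x => ⟪u, x⟫) '' K) :=
  (isCompact_image_inner hK u).sSup_mem (hne.image _)

lemma exists_inner_eq_sInf (hK : IsCompact K) (hne : K.Nonempty) (u : EuclideanSpace ℝ (Fin d)) :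
    ∃ q ∈ K, ⟪u, q⟫ = sInf ((fun x => ⟪u, x⟫) '' K) :=
  (isCompact_image_inner hK u).sInf_mem (hne.image _)

lemma width_empty (u : EuclideanSpace ℝ (Fin d)) : width ∅ u = 0 := by
  simp [width]

lemma width_nonneg (hK : IsCompact K) : 0 ≤ width K v := by
  rcases K.eq_empty_or_nonempty with rfl | ⟨x, hx⟩
  · rw [width_empty]
  · exact sub_nonneg.2 ((sInf_le_inner hK hx).trans (inner_le_sSup hK hx))

lemma width_mono (hK : IsCompact K) (hSK : S ⊆ K) : width S v ≤ width K v := by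
  rcases S.eq_empty_or_nonempty with rfl | hS
  · rw [width_empty]; exact width_nonneg hK
  · have him := image_mono (f := fun x => ⟪v, x⟫) hSK
    exact sub_le_sub (csSup_le_csSup (isCompact_image_inner hK v).bddAbove (hS.image _) him)
      (csInf_le_csInf (isCompact_image_inner hK v).bddBelow (hS.image _) him)

lemma width_pos (hK : IsCompact K) (hKint : (interior K).Nonempty) (hu : u ≠ 0) :
    0 < width K u := by
  obtain ⟨x₀, hx₀⟩ := hKint
  have hline : ∀ᶠ t in nhds (0 : ℝ), x₀ + t • u ∈ K ∧ x₀ + (-t) • u ∈ K := by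
    have hc : Continuous fun t : ℝ => x₀ + t • u := by fun_prop
    have hK0 : ∀ᶠ t in nhds (0 : ℝ), x₀ + t • u ∈ K :=
      hc.continuousAt.preimage_mem_nhds (by simpa using mem_interior_iff_mem_nhds.1 hx₀)
    exact hK0.and ((continuous_neg.tendsto' 0 0 neg_zero).eventually hK0)
  obtain ⟨t, ⟨hplus, hminus⟩, ht⟩ :=
    ((hline.filter_mono nhdsWithin_le_nhds).and (self_mem_nhdsWithin (s := Ioi 0))).exists
  have hgap : ⟪u, x₀ + t • u⟫ - ⟪u, x₀ + (-t) • u⟫ = 2 * t * ‖u‖ ^ 2 := by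
    simp only [inner_add_right, real_inner_smul_right, real_inner_self_eq_norm_sq]
    ring
  have : 0 < 2 * t * ‖u‖ ^ 2 := mul_pos (mul_pos two_pos ht) (pow_pos (norm_pos_iff.2 hu) 2)
  unfold width
  linarith [inner_le_sSup (u := u) hK hplus, sInf_le_inner (u := u) hK hminus]

lemma mul_width_le_of_mapsTo_homothety (hK : IsCompact K) (hS : IsCompact S)
    {p : EuclideanSpace ℝ (Fin d)} {l : ℝ}
    (hmaps : MapsTo (AffineMap.homothety p l) K S) : l * width K v ≤ width S v := by
  rcases K.eq_empty_or_nonempty with rfl | hne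
  · rw [width_empty, mul_zero]; exact width_nonneg hS
  obtain ⟨xmax, hxmax, hmax⟩ := exists_inner_eq_sSup hK hne v
  obtain ⟨xmin, hxmin, hmin⟩ := exists_inner_eq_sInf hK hne v
  have h1 := inner_le_sSup (u := v) hS (hmaps hxmax)
  have h2 := sInf_le_inner (u := v) hS (hmaps hxmin)
  rw [inner_homothety] at h1 h2
  unfold width
  rw [← hmax, ← hmin]
  linarith

end Width

section Centroid

variable {d : ℕ} {K : Set (EuclideanSpace ℝ (Fin d))} {u : EuclideanSpace ℝ (Fin d)}

lemma inner_centroid (hK : IsCompact K) (u : EuclideanSpace ℝ (Fin d)) :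
    ⟪u, centroid K⟫ = (volume.real K)⁻¹ * ∫ x in K, ⟪u, x⟫ := by
  have hid : IntegrableOn (fun x : EuclideanSpace ℝ (Fin d) => x) K :=
    continuousOn_id.integrableOn_compact hK
  rw [centroid, real_inner_smul_right, ← integral_inner hid]
  rfl

lemma pow_mul_measureReal_le_measureReal_inter_sublevel (hK : IsCompact K) (hconv : Convex ℝ K)
    {q : EuclideanSpace ℝ (Fin d)} (hq : q ∈ K) {l : ℝ} (hl : l ∈ Icc (0 : ℝ) 1) {c : ℝ}
    (hc : ∀ x ∈ K, ⟪u, x⟫ ≤ c) :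
    l ^ d * volume.real K ≤ volume.real (K ∩ {x | ⟪u, x⟫ ≤ l * c + (1 - l) * ⟪u, q⟫}) := by
  have hsub : AffineMap.homothety q l '' K ⊆ K ∩ {x | ⟪u, x⟫ ≤ l * c + (1 - l) * ⟪u, q⟫} := by
    rintro _ ⟨x, hx, rfl⟩
    refine ⟨hconv.mapsTo_homothety hq hl hx, ?_⟩
    rw [mem_ofPred_eq, inner_homothety]
    gcongr
    exacts [hl.1, hc x hx]
  calc l ^ d * volume.real K = volume.real (AffineMap.homothety q l '' K) := by
        show l ^ d * (volume K).toReal = (volume (AffineMap.homothety q l '' K)).toReal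
        rw [Measure.addHaar_image_homothety, finrank_euclideanSpace_fin,
          ENNReal.toReal_mul, ENNReal.toReal_ofReal (by positivity),
          abs_of_nonneg (pow_nonneg hl.1 _)]
    _ ≤ _ := measureReal_mono hsub ((measure_mono inter_subset_left).trans_lt hK.measure_lt_top).ne

lemma integral_one_sub_div_pow {w : ℝ} (hw : w ≠ 0) (d : ℕ) :
    ∫ t in (0 : ℝ)..w, (1 - t / w) ^ d = w / (d + 1) := by
  rw [intervalIntegral.integral_comp_div (fun s => (1 - s) ^ d) hw,
    intervalIntegral.integral_comp_sub_left (fun s => s ^ d), integral_pow]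
  simp [div_self hw]
  field_simp

lemma measureReal_mul_width_div_le_setIntegral (hK : IsCompact K) (hconv : Convex ℝ K)
    (hw : 0 < width K u) :
    volume.real K * width K u / (d + 1) ≤ ∫ x in K, (sSup ((fun x => ⟪u, x⟫) '' K) - ⟪u, x⟫) := by
  set b := sSup ((fun x => ⟪u, x⟫) '' K)
  set w := width K u
  have hne : K.Nonempty := nonempty_iff_ne_empty.2 (by rintro rfl; simp [w, width_empty] at hw)
  obtain ⟨q, hqK, hq⟩ := exists_inner_eq_sInf hK hne u
  have hbq : b = ⟪u, q⟫ + w := by simp only [w, width, hq]; ring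
  have := isFiniteMeasure_restrict (μ := volume).2 hK.measure_lt_top.ne
  have hlayer : ∫ x in K, (b - ⟪u, x⟫) =
      ∫ t in Ioc 0 w, (volume.restrict K).real {x | t ≤ b - ⟪u, x⟫} := by
    refine Integrable.integral_eq_integral_Ioc_meas_le
      ((continuous_const.sub (continuous_const.inner continuous_id)).continuousOn
        |>.integrableOn_compact (μ := volume) hK) ?_ ?_
    · exact ae_restrict_of_forall_mem hK.measurableSet
        fun x hx => sub_nonneg.2 (inner_le_sSup hK hx)
    · refine ae_restrict_of_forall_mem hK.measurableSet fun x hx => ?_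
      have := sInf_le_inner (u := u) hK hx
      show b - ⟪u, x⟫ ≤ w
      linarith
  have hslice : ∀ t ∈ Ioc 0 w,
      (1 - t / w) ^ d * volume.real K ≤ (volume.restrict K).real {x | t ≤ b - ⟪u, x⟫} := by
    rintro t ⟨ht0, htw⟩
    have hl : 1 - t / w ∈ Icc (0 : ℝ) 1 :=
      ⟨sub_nonneg.2 ((div_le_one hw).2 htw), sub_le_self _ (div_pos ht0 hw).le⟩
    refine (pow_mul_measureReal_le_measureReal_inter_sublevel (c := b) hK hconv hqK hl
      fun x hx => inner_le_sSup (u := u) hK hx).trans_eq ?_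
    rw [measureReal_restrict_apply (measurableSet_le measurable_const (by fun_prop)), inter_comm]
    congr with x
    have : (1 - t / w) * b + (1 - (1 - t / w)) * ⟪u, q⟫ = b - t := by
      rw [hbq]; field_simp; ring
    rw [this, le_sub_comm]
  have hanti : AntitoneOn (fun t => (volume.restrict K).real {x | t ≤ b - ⟪u, x⟫}) (Icc 0 w) :=
    fun s _ t _ hst => measureReal_mono fun x (hx : t ≤ _) => hst.trans hx
  calc volume.real K * w / (d + 1) = ∫ t in Ioc 0 w, (1 - t / w) ^ d * volume.real K := by
        rw [integral_mul_const, ← intervalIntegral.integral_of_le hw.le,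
          integral_one_sub_div_pow hw.ne']
        ring
    _ ≤ ∫ t in Ioc 0 w, (volume.restrict K).real {x | t ≤ b - ⟪u, x⟫} :=
        setIntegral_mono_on (Continuous.integrableOn_Ioc (by fun_prop))
          ((hanti.integrableOn_isCompact (μ := volume) isCompact_Icc).mono_set Ioc_subset_Icc_self)
          measurableSet_Ioc hslice
    _ = _ := hlayer.symm

lemma inner_centroid_le (hK : IsCompact K) (hconv : Convex ℝ K) (hKint : (interior K).Nonempty)
    (hw : 0 < width K u) :
    ⟪u, centroid K⟫ ≤ sSup ((fun x => ⟪u, x⟫) '' K) - width K u / (d + 1) := by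
  have hM : 0 < volume.real K :=
    ENNReal.toReal_pos ((isOpen_interior.measure_pos volume hKint).trans_le
      (measure_mono interior_subset)).ne' hK.measure_lt_top.ne
  have hint := measureReal_mul_width_div_le_setIntegral hK hconv hw
  have := isFiniteMeasure_restrict (μ := volume).2 hK.measure_lt_top.ne
  rw [integral_sub (integrable_const _)
    ((continuous_const.inner continuous_id).continuousOn.integrableOn_compact (μ := volume) hK),
    setIntegral_const, smul_eq_mul] at hint
  rw [inner_centroid hK, inv_mul_le_iff₀ hM, mul_sub, ← mul_div_assoc]
  linarith

end Centroid

lemma min_mul_width_le_width_inter_halfspace {d : ℕ} {K : Set (EuclideanSpace ℝ (Fin d))}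
    (hK : IsCompact K) (hconv : Convex ℝ K) {u : EuclideanSpace ℝ (Fin d)} (hw : 0 < width K u)
    (z v : EuclideanSpace ℝ (Fin d)) :
    min 1 ((sSup ((fun x => ⟪u, x⟫) '' K) - ⟪u, z⟫) / width K u) * width K v ≤
      width (K ∩ {x | 0 ≤ ⟪u, x - z⟫}) v := by
  set b := sSup ((fun x => ⟪u, x⟫) '' K)
  set l := min 1 ((b - ⟪u, z⟫) / width K u)
  have hcut : IsCompact (K ∩ {x | 0 ≤ ⟪u, x - z⟫}) :=
    hK.inter_right (isClosed_le continuous_const (by fun_prop))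
  rcases le_or_gt b ⟪u, z⟫ with hbz | hzb
  · have hl : l ≤ 0 :=
      (min_le_right _ _).trans (div_nonpos_of_nonpos_of_nonneg (sub_nonpos.2 hbz) hw.le)
    exact (mul_nonpos_of_nonpos_of_nonneg hl (width_nonneg hK)).trans (width_nonneg hcut)
  have hne : K.Nonempty := nonempty_iff_ne_empty.2 (by rintro rfl; simp [width_empty] at hw)
  obtain ⟨p, hpK, hp⟩ := exists_inner_eq_sSup hK hne u
  have hl : l ∈ Icc (0 : ℝ) 1 :=
    ⟨le_min zero_le_one (div_pos (sub_pos.2 hzb) hw).le, min_le_left _ _⟩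
  have hlw : l * width K u ≤ b - ⟪u, z⟫ := (le_div_iff₀ hw).1 (min_le_right _ _)
  refine mul_width_le_of_mapsTo_homothety hK hcut (p := p)
    fun x hx => ⟨hconv.mapsTo_homothety hpK hl hx, ?_⟩
  have hlx := mul_le_mul_of_nonneg_left (sInf_le_inner (u := u) hK hx) hl.1
  rw [mem_ofPred_eq, inner_sub_right, inner_homothety, hp]
  unfold width at hlw
  linarith

lemma mul_sub_mul_max_le_min_sub_mul {a ρ w x : ℝ} (ha : a ≤ 1) (hρ : 0 ≤ ρ) (hx : 0 ≤ x) :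
    a * x - ρ * max 1 (x / w) ≤ min 1 (a - ρ / w) * x := by
  have hρx : ρ / w * x = ρ * (x / w) := by ring
  rcases min_cases (1 : ℝ) (a - ρ / w) with ⟨hmin, -⟩ | ⟨hmin, -⟩ <;> rw [hmin]
  · nlinarith [mul_nonneg hρ (zero_le_one.trans (le_max_left 1 (x / w)))]
  · rw [sub_mul, hρx]
    gcongr
    exact le_max_right _ _

theorem approx_directional_grunbaum_general {d : ℕ} (K : Set (EuclideanSpace ℝ (Fin d)))
    (hKcompact : IsCompact K) (hKconv : Convex ℝ K) (hKint : (interior K).Nonempty)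
    (ρ : ℝ) (z' : EuclideanSpace ℝ (Fin d)) (hz' : ‖centroid K - z'‖ ≤ ρ)
    (u : EuclideanSpace ℝ (Fin d)) (hu : ‖u‖ = 1)
    (v : EuclideanSpace ℝ (Fin d)) :
    (1 / (d + 1 : ℝ)) * width K v - ρ * max 1 (width K v / width K u) ≤
        width (K ∩ {x | 0 ≤ ⟪u, x - z'⟫}) v ∧
      width (K ∩ {x | 0 ≤ ⟪u, x - z'⟫}) v ≤ width K v := by
  have hwu : 0 < width K u := width_pos hKcompact hKint (by rintro rfl; simp at hu)
  have hwv : 0 ≤ width K v := width_nonneg hKcompact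
  have hρ : 0 ≤ ρ := (norm_nonneg _).trans hz'
  have hshift : ⟪u, z'⟫ ≤ ⟪u, centroid K⟫ + ρ := by
    have := real_inner_le_norm u (z' - centroid K)
    rw [inner_sub_right, hu, one_mul, norm_sub_rev] at this
    linarith
  have hgap : 1 / (d + 1) - ρ / width K u ≤
      (sSup ((fun x => ⟪u, x⟫) '' K) - ⟪u, z'⟫) / width K u := by
    have := inner_centroid_le hKcompact hKconv hKint hwu
    rw [le_div_iff₀ hwu, sub_mul, div_mul_cancel₀ _ hwu.ne', one_div_mul_eq_div]
    linarith
  refine ⟨?_, width_mono hKcompact inter_subset_left⟩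
  calc _ ≤ min 1 (1 / (d + 1) - ρ / width K u) * width K v :=
        mul_sub_mul_max_le_min_sub_mul (div_le_one_of_le₀ (by simp) (by positivity)) hρ hwv
    _ ≤ min 1 ((sSup ((fun x => ⟪u, x⟫) '' K) - ⟪u, z'⟫) / width K u) * width K v := by gcongr
    _ ≤ _ := min_mul_width_le_width_inter_halfspace hKcompact hKconv hwu z' v

/-- Approximate directional Grünbaum theorem: cutting a convex body through an
approximate centroid `z'` with `‖z - z'‖ ≤ ρ` keeps at least a
`1/(d+1)` fraction of every directional width, up to an error term in `ρ`. -/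
theorem approx_directional_grunbaum {d : ℕ} (K : Set (EuclideanSpace ℝ (Fin d)))
    (hKcompact : IsCompact K) (hKconv : Convex ℝ K) (hKint : (interior K).Nonempty)
    (ρ : ℝ) (z' : EuclideanSpace ℝ (Fin d)) (hz' : ‖centroid K - z'‖ ≤ ρ)
    (u : EuclideanSpace ℝ (Fin d)) (hu : ‖u‖ = 1)
    (v : EuclideanSpace ℝ (Fin d)) (hv : ‖v‖ = 1) :
    (1 / (d + 1 : ℝ)) * width K v - ρ * max 1 (width K v / width K u) ≤
        width (K ∩ {x | 0 ≤ ⟪u, x - z'⟫}) v ∧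
      width (K ∩ {x | 0 ≤ ⟪u, x - z'⟫}) v ≤ width K v :=
  approx_directional_grunbaum_general K hKcompact hKconv hKint ρ z' hz' u hu v
end

section
/- Let K ⊂ ℝ^d be a convex body whose orthogonal projection onto the first coordinate axis equals the interval [0, 1] (i.e., {x⊤e₁ : x ∈ K} = [0, 1]). Then the first coordinate of the centroid z of K satisfies z⊤e₁ ≥ 1/(d+1). -/
open MeasureTheory Set

/-!
By the layer-cake formula, `∫_K x₁ = ∫₀¹ vol (K ∩ {x₁ ≥ t}) dt`. If `b ∈ K` has `b₁ = 1`, the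
homothety of center `b` and ratio `1 - t` maps `K` into `K ∩ {x₁ ≥ t}` by convexity, so that set
has volume at least `(1 - t)ᵈ vol K`; integrating gives `∫_K x₁ ≥ vol K / (d + 1)`.
-/

theorem homothety_image_subset_inter_superlevel {E : Type*} [AddCommGroup E] [Module ℝ E]
    {K : Set E} {b : E} {f : E →ₗ[ℝ] ℝ} (hK : Convex ℝ K) (hb : b ∈ K) (hfb : f b = 1)
    (hf : ∀ x ∈ K, 0 ≤ f x) {t : ℝ} (ht : t ∈ Icc 0 1) :
    AffineMap.homothety b (1 - t) '' K ⊆ K ∩ {x | t ≤ f x} := by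
  rintro _ ⟨x, hx, rfl⟩
  refine ⟨?_, ?_⟩
  · rw [AffineMap.homothety_eq_lineMap]
    exact hK.lineMap_mem hb hx ⟨by linarith [ht.2], by linarith [ht.1]⟩
  · have hfx : f (AffineMap.homothety b (1 - t) x) = t + (1 - t) * f x := by
      simp only [AffineMap.homothety_apply, vsub_eq_sub, vadd_eq_add, map_add, map_smul, map_sub,
        hfb, smul_eq_mul]
      ring
    show t ≤ _
    nlinarith [hf x hx, ht.2]

theorem lintegral_Ioc_one_sub_pow (n : ℕ) :
    ∫⁻ t in Ioc (0 : ℝ) 1, ENNReal.ofReal ((1 - t) ^ n) = ENNReal.ofReal (1 / (n + 1)) := by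
  rw [← ofReal_integral_eq_lintegral_ofReal, ← intervalIntegral.integral_of_le zero_le_one]
  · simp [intervalIntegral.integral_comp_sub_left (fun s => s ^ n)]
  · exact (by fun_prop : Continuous fun t : ℝ => (1 - t) ^ n).integrableOn_Icc.mono_set
      Ioc_subset_Icc_self
  · exact ae_restrict_of_forall_mem measurableSet_Ioc fun t ht => pow_nonneg (by linarith [ht.2]) n

section
variable {E : Type*} [NormedAddCommGroup E] [NormedSpace ℝ E] [MeasurableSpace E] [BorelSpace E]
  [FiniteDimensional ℝ E] (μ : Measure E) [μ.IsAddHaarMeasure] {K : Set E} {b : E}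
  {f : E →L[ℝ] ℝ}

theorem measure_inter_superlevel_ge (hK : Convex ℝ K) (hb : b ∈ K) (hfb : f b = 1)
    (hf : ∀ x ∈ K, 0 ≤ f x) {t : ℝ} (ht : t ∈ Icc 0 1) :
    ENNReal.ofReal ((1 - t) ^ Module.finrank ℝ E) * μ K ≤ μ (K ∩ {x | t ≤ f x}) := by
  calc ENNReal.ofReal ((1 - t) ^ Module.finrank ℝ E) * μ K
      = μ (AffineMap.homothety b (1 - t) '' K) := by
        rw [Measure.addHaar_image_homothety, abs_of_nonneg (pow_nonneg (by linarith [ht.2]) _)]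
    _ ≤ μ (K ∩ {x | t ≤ f x}) :=
        measure_mono (homothety_image_subset_inter_superlevel (f := f) hK hb hfb hf ht)

theorem inv_succ_mul_measure_le_setLIntegral (hK : Convex ℝ K) (hKm : MeasurableSet K)
    (hb : b ∈ K) (hfb : f b = 1) (hf : ∀ x ∈ K, 0 ≤ f x) :
    ENNReal.ofReal (1 / (Module.finrank ℝ E + 1)) * μ K ≤ ∫⁻ x in K, ENNReal.ofReal (f x) ∂μ := by
  rw [lintegral_eq_lintegral_meas_le _ (ae_restrict_of_forall_mem hKm hf)
    f.continuous.aemeasurable, ← lintegral_Ioc_one_sub_pow, ← lintegral_mul_const _ (by fun_prop)]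
  calc ∫⁻ t in Ioc 0 1, ENNReal.ofReal ((1 - t) ^ Module.finrank ℝ E) * μ K
      ≤ ∫⁻ t in Ioc 0 1, μ.restrict K {x | t ≤ f x} := by
        refine setLIntegral_mono' measurableSet_Ioc fun t ht => ?_
        rw [Measure.restrict_apply' hKm, inter_comm]
        exact measure_inter_superlevel_ge μ hK hb hfb hf (Ioc_subset_Icc_self ht)
    _ ≤ ∫⁻ t in Ioi 0, μ.restrict K {x | t ≤ f x} := lintegral_mono_set Ioc_subset_Ioi_self

theorem measureReal_div_le_setIntegral (hK : Convex ℝ K) (hKc : IsCompact K) (hb : b ∈ K)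
    (hfb : f b = 1) (hf : ∀ x ∈ K, 0 ≤ f x) :
    μ.real K / (Module.finrank ℝ E + 1) ≤ ∫ x in K, f x ∂μ := by
  have hfi : IntegrableOn f K μ := f.continuous.continuousOn.integrableOn_compact hKc
  have key := inv_succ_mul_measure_le_setLIntegral μ hK hKc.measurableSet hb hfb hf
  rw [← ofReal_integral_eq_lintegral_ofReal hfi (ae_restrict_of_forall_mem hKc.measurableSet hf),
    ← ofReal_measureReal hKc.measure_lt_top.ne, ← ENNReal.ofReal_mul (by positivity),
    ENNReal.ofReal_le_ofReal_iff (setIntegral_nonneg hKc.measurableSet hf)] at key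
  rwa [one_div_mul_eq_div] at key
end

/-- If the projection of a convex body `K ⊆ ℝ^d` onto the first coordinate axis is
`[0, 1]`, then the first coordinate of the centroid of `K` is at least `1/(d+1)`. -/
theorem centroid_first_coordinate {d : ℕ} (hd : 1 ≤ d)
    (K : Set (EuclideanSpace ℝ (Fin d)))
    (hKcompact : IsCompact K) (hKconv : Convex ℝ K) (hKint : (interior K).Nonempty)
    (hproj : (fun x : EuclideanSpace ℝ (Fin d) => x ⟨0, hd⟩) '' K = Icc 0 1) :
    (1 : ℝ) / (d + 1) ≤ ((volume K).toReal⁻¹ • ∫ x in K, x) ⟨0, hd⟩ := by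
  set e₁ := EuclideanSpace.proj (𝕜 := ℝ) (ι := Fin d) ⟨0, hd⟩
  obtain ⟨b, hb, hb1⟩ : (1 : ℝ) ∈ (fun x : EuclideanSpace ℝ (Fin d) => x ⟨0, hd⟩) '' K :=
    hproj ▸ right_mem_Icc.2 zero_le_one
  have hnonneg (x) (hx : x ∈ K) : 0 ≤ e₁ x := (hproj.subset (mem_image_of_mem _ hx)).1
  have hvol : 0 < volume.real K :=
    ENNReal.toReal_pos ((isOpen_interior.measure_pos volume hKint).trans_le
      (measure_mono interior_subset)).ne' hKcompact.measure_lt_top.ne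
  have hcoord : (∫ x in K, x) ⟨0, hd⟩ = ∫ x in K, e₁ x :=
    (e₁.integral_comp_comm (continuousOn_id.integrableOn_compact hKcompact)).symm
  rw [PiLp.smul_apply, hcoord, smul_eq_mul, ← measureReal_def, le_inv_mul_iff₀ hvol, mul_one_div]
  simpa [finrank_euclideanSpace_fin] using
    measureReal_div_le_setIntegral volume hKconv hKcompact hb hb1 hnonneg
end

section
/- Let d ≥ 2 and let r : [0, 1] → ℝ be a nonnegative concave function that is strictly positive on the open interval (0, 1). Let V = ∫₀¹ r(t)^{d−1} dt and define r̃(t) = (V·d)^{1/(d−1)}·(1 − t). Then ∫₀¹ r̃(t)^{d−1} dt = V and ∫₀¹ t·r̃(t)^{d−1} dt ≤ ∫₀¹ t·r(t)^{d−1} dt. -/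
open MeasureTheory Set intervalIntegral

/-! Concavity and `r 1 ≥ 0` give `(1 - s) * r x ≤ r ((1 - s) * x + s)`, so `f = r ^ (d - 1)`
has tail mass `∫ₛ¹ f ≥ (1 - s) ^ d * ∫₀¹ f`. Since the first moment `∫₀¹ t f` is the integral
of the tail masses over `s ∈ [0, 1]`, it is at least `V / (d + 1)`, which is the first moment
of the linear profile `r̃`; the slope of `r̃` is chosen so that `r̃ ^ (d - 1)` has mass `V`. -/

theorem intervalIntegrable_of_continuousOn_Ioo_of_norm_le {E : Type*} [NormedAddCommGroup E]
    {g : ℝ → E} {a b C : ℝ} (hab : a ≤ b) (hg : ContinuousOn g (Ioo a b))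
    (hC : ∀ t ∈ Ioo a b, ‖g t‖ ≤ C) : IntervalIntegrable g volume a b := by
  rw [intervalIntegrable_iff_integrableOn_Ioo_of_le hab]
  exact ⟨hg.aestronglyMeasurable measurableSet_Ioo,
    .of_bounded ((ae_restrict_iff' measurableSet_Ioo).2 (ae_of_all _ hC))⟩

theorem ConcaveOn.le_two_mul_midpoint {r : ℝ → ℝ} {a b : ℝ} (hconc : ConcaveOn ℝ (Icc a b) r)
    (hnn : ∀ t ∈ Icc a b, 0 ≤ r t) {t : ℝ} (ht : t ∈ Icc a b) :
    r t ≤ 2 * r ((a + b) / 2) := by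
  have hreflect : a + b - t ∈ Icc a b := ⟨by linarith [ht.2], by linarith [ht.1]⟩
  have hmid := hconc.2 ht hreflect one_half_pos.le one_half_pos.le (add_halves 1)
  simp only [smul_eq_mul] at hmid
  rw [show 1 / 2 * t + 1 / 2 * (a + b - t) = (a + b) / 2 by ring] at hmid
  linarith [hnn _ hreflect]

theorem ConcaveOn.continuousOn_Ioo {r : ℝ → ℝ} {a b : ℝ} (hconc : ConcaveOn ℝ (Icc a b) r) :
    ContinuousOn r (Ioo a b) := by
  simpa using hconc.continuousOn_interior

theorem ConcaveOn.intervalIntegrable_pow {r : ℝ → ℝ} {a b : ℝ} (hab : a ≤ b)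
    (hconc : ConcaveOn ℝ (Icc a b) r) (hnn : ∀ t ∈ Icc a b, 0 ≤ r t) (n : ℕ) :
    IntervalIntegrable (fun t => r t ^ n) volume a b := by
  refine intervalIntegrable_of_continuousOn_Ioo_of_norm_le hab (hconc.continuousOn_Ioo.pow n)
    (C := (2 * r ((a + b) / 2)) ^ n) fun t ht => ?_
  have ht' := Ioo_subset_Icc_self ht
  rw [norm_pow, Real.norm_of_nonneg (hnn t ht')]
  exact pow_le_pow_left₀ (hnn t ht') (hconc.le_two_mul_midpoint hnn ht') n

theorem integral_sub_mul_eq_integral_integral {f : ℝ → ℝ} {a b : ℝ} (hab : a ≤ b)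
    (hf : IntervalIntegrable f volume a b) (hfc : ContinuousOn f (Ioo a b)) :
    ∫ t in a..b, (t - a) * f t = ∫ s in a..b, ∫ t in s..b, f t := by
  -- Integrate by parts against the tail primitive `s ↦ ∫ t in s..b, f t`, which vanishes at `b`.
  have htail : ContinuousOn (fun s => ∫ t in s..b, f t) (uIcc a b) :=
    continuousOn_primitive_interval_left ((intervalIntegrable_iff' (f := f)).1 hf)
  have htail_deriv : ∀ s ∈ Ioo (min a b) (max a b),
      HasDerivAt (fun s => ∫ t in s..b, f t) (-f s) s := by
    rw [min_eq_left hab, max_eq_right hab]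
    intro s hs
    have hsb : IntervalIntegrable f volume s b :=
      hf.mono_set <| uIcc_subset_uIcc_right <| by
        rw [uIcc_of_le hab]; exact Ioo_subset_Icc_self hs
    exact integral_hasDerivAt_left hsb
      (hfc.stronglyMeasurableAtFilter isOpen_Ioo s hs) (hfc.continuousAt (isOpen_Ioo.mem_nhds hs))
  have hparts := integral_deriv_mul_eq_sub_of_hasDerivAt (u := fun t => t - a) (u' := fun _ => 1)
    (continuousOn_id.sub continuousOn_const) htail (fun t _ => (hasDerivAt_id t).sub_const a)
    htail_deriv intervalIntegrable_const hf.neg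
  simp only [one_mul, mul_neg, ← sub_eq_add_neg, integral_same, mul_zero, sub_self,
    zero_mul] at hparts
  rw [integral_sub htail.intervalIntegrable
    (hf.continuousOn_mul (g := fun t => t - a) (by fun_prop))] at hparts
  linarith

theorem ConcaveOn.one_sub_pow_mul_integral_pow_le {r : ℝ → ℝ}
    (hconc : ConcaveOn ℝ (Icc 0 1) r) (hnn : ∀ t ∈ Icc (0 : ℝ) 1, 0 ≤ r t) (n : ℕ)
    {s : ℝ} (hs : s ∈ Icc (0 : ℝ) 1) :
    (1 - s) ^ (n + 1) * ∫ t in (0 : ℝ)..1, r t ^ n ≤ ∫ t in s..1, r t ^ n := by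
  have hs' : 0 ≤ 1 - s := sub_nonneg.2 hs.2
  have hmaps : ∀ x ∈ Icc (0 : ℝ) 1, (1 - s) * x + s ∈ Icc (0 : ℝ) 1 := fun x hx =>
    ⟨by nlinarith [hx.1, hs.1], by nlinarith [hx.2, hs.1]⟩
  have hscaled : ConcaveOn ℝ (Icc 0 1) fun x => r ((1 - s) * x + s) := by
    refine ⟨convex_Icc 0 1, fun x hx y hy a b ha hb hab => ?_⟩
    convert hconc.2 (hmaps x hx) (hmaps y hy) ha hb hab using 2
    simp only [smul_eq_mul]
    linear_combination (-s) * hab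
  have hpointwise : ∀ x ∈ Icc (0 : ℝ) 1, (1 - s) * r x ≤ r ((1 - s) * x + s) := by
    intro x hx
    have := hconc.2 hx (right_mem_Icc.2 zero_le_one) hs' hs.1 (by ring)
    simp only [smul_eq_mul, mul_one] at this
    nlinarith [mul_nonneg hs.1 (hnn 1 (right_mem_Icc.2 zero_le_one))]
  have hsubst :
      ∫ t in s..1, r t ^ n = (1 - s) * ∫ x in (0 : ℝ)..1, r ((1 - s) * x + s) ^ n := by
    simpa using (smul_integral_comp_mul_add (a := 0) (b := 1) (fun t => r t ^ n) (1 - s) s).symm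
  rw [hsubst, pow_succ', mul_assoc, ← intervalIntegral.integral_const_mul]
  refine mul_le_mul_of_nonneg_left (integral_mono_on zero_le_one
    ((hconc.intervalIntegrable_pow zero_le_one hnn n).const_mul _)
    (hscaled.intervalIntegrable_pow zero_le_one (fun x hx => hnn _ (hmaps x hx)) n)
    fun x hx => ?_) hs'
  rw [← mul_pow]
  exact pow_le_pow_left₀ (mul_nonneg hs' (hnn x hx)) (hpointwise x hx) n

theorem integral_one_sub_pow (n : ℕ) : ∫ t in (0 : ℝ)..1, (1 - t) ^ n = 1 / (n + 1) := by
  simp [integral_comp_sub_left fun t : ℝ => t ^ n]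

theorem integral_mul_one_sub_pow (n : ℕ) :
    ∫ t in (0 : ℝ)..1, t * (1 - t) ^ n = 1 / ((n + 1) * (n + 2)) := by
  have hreflect := integral_comp_sub_left (a := 0) (b := 1) (fun t : ℝ => (1 - t) * t ^ n) 1
  simp only [sub_sub_cancel, sub_self, sub_zero] at hreflect
  simp_rw [hreflect, sub_mul, one_mul, ← pow_succ']
  rw [integral_sub (intervalIntegrable_pow n) (intervalIntegrable_pow (n + 1)), integral_pow,
    integral_pow]
  push_cast
  field_simp
  ring

theorem ConcaveOn.integral_pow_div_le_integral_mul_pow {r : ℝ → ℝ}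
    (hconc : ConcaveOn ℝ (Icc 0 1) r) (hnn : ∀ t ∈ Icc (0 : ℝ) 1, 0 ≤ r t) (n : ℕ) :
    (∫ t in (0 : ℝ)..1, r t ^ n) / (n + 2) ≤ ∫ t in (0 : ℝ)..1, t * r t ^ n := by
  have hint := hconc.intervalIntegrable_pow zero_le_one hnn n
  have hlayer :=
    integral_sub_mul_eq_integral_integral zero_le_one hint (hconc.continuousOn_Ioo.pow n)
  simp only [sub_zero] at hlayer
  have htail : IntervalIntegrable (fun s => ∫ t in s..1, r t ^ n) volume 0 1 :=
    (continuousOn_primitive_interval_left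
      ((intervalIntegrable_iff' (f := fun t => r t ^ n)).1 hint)).intervalIntegrable
  calc (∫ t in (0 : ℝ)..1, r t ^ n) / (n + 2)
      = ∫ s in (0 : ℝ)..1, (1 - s) ^ (n + 1) * ∫ t in (0 : ℝ)..1, r t ^ n := by
        rw [intervalIntegral.integral_mul_const, integral_one_sub_pow]
        push_cast
        ring
    _ ≤ ∫ s in (0 : ℝ)..1, ∫ t in s..1, r t ^ n :=
        integral_mono_on zero_le_one ((by fun_prop : Continuous _).intervalIntegrable _ _) htail
          fun s hs => hconc.one_sub_pow_mul_integral_pow_le hnn n hs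
    _ = ∫ t in (0 : ℝ)..1, t * r t ^ n := hlayer.symm

theorem linearize_concave_profile_general {d : ℕ} (hd : 2 ≤ d) (r : ℝ → ℝ)
    (hconc : ConcaveOn ℝ (Icc 0 1) r)
    (hnn : ∀ t ∈ Icc (0 : ℝ) 1, 0 ≤ r t) :
    (∫ t in (0 : ℝ)..1,
        (((∫ τ in (0 : ℝ)..1, r τ ^ (d - 1)) * d) ^ (1 / ((d : ℝ) - 1)) * (1 - t))
          ^ (d - 1)) =
      (∫ τ in (0 : ℝ)..1, r τ ^ (d - 1)) ∧
    (∫ t in (0 : ℝ)..1,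
        t * (((∫ τ in (0 : ℝ)..1, r τ ^ (d - 1)) * d) ^ (1 / ((d : ℝ) - 1)) * (1 - t))
          ^ (d - 1)) ≤
      ∫ t in (0 : ℝ)..1, t * r t ^ (d - 1) := by
  obtain ⟨n, rfl⟩ : ∃ n, d = n + 1 := ⟨d - 1, by omega⟩
  have hn : n ≠ 0 := by omega
  simp only [Nat.add_sub_cancel, Nat.cast_add, Nat.cast_one, add_sub_cancel_right, one_div]
  set V := ∫ τ in (0 : ℝ)..1, r τ ^ n
  have hV : 0 ≤ V := integral_nonneg zero_le_one fun t ht => pow_nonneg (hnn t ht) n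
  have hc : ((V * (n + 1)) ^ (n⁻¹ : ℝ)) ^ n = V * (n + 1) :=
    Real.rpow_inv_natCast_pow (by positivity) hn
  have hmoment : ∀ t : ℝ, t * (V * (n + 1) * (1 - t) ^ n) = V * (n + 1) * (t * (1 - t) ^ n) :=
    fun t => by ring
  simp only [mul_pow, hc, hmoment, intervalIntegral.integral_const_mul, integral_one_sub_pow,
    integral_mul_one_sub_pow]
  constructor
  · field_simp
  · calc V * (n + 1) * (1 / ((n + 1) * (n + 2))) = V / (n + 2) := by field_simp
      _ ≤ _ := hconc.integral_pow_div_le_integral_mul_pow hnn n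

/-- Linearization step: for a nonnegative concave function `r` on `[0,1]` that is
positive on `(0,1)`, the linear function `r̃(t) = (Vd)^{1/(d-1)}(1-t)`, where
`V = ∫₀¹ r(t)^{d-1} dt`, has the same integral of the `(d-1)`-st power, and a smaller
integral of `t` times the `(d-1)`-st power. -/
theorem linearize_concave_profile {d : ℕ} (hd : 2 ≤ d) (r : ℝ → ℝ)
    (hconc : ConcaveOn ℝ (Icc 0 1) r)
    (hnn : ∀ t ∈ Icc (0 : ℝ) 1, 0 ≤ r t)
    (hpos : ∀ t ∈ Ioo (0 : ℝ) 1, 0 < r t) :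
    (∫ t in (0 : ℝ)..1,
        (((∫ τ in (0 : ℝ)..1, r τ ^ (d - 1)) * d) ^ (1 / ((d : ℝ) - 1)) * (1 - t))
          ^ (d - 1)) =
      (∫ τ in (0 : ℝ)..1, r τ ^ (d - 1)) ∧
    (∫ t in (0 : ℝ)..1,
        t * (((∫ τ in (0 : ℝ)..1, r τ ^ (d - 1)) * d) ^ (1 / ((d : ℝ) - 1)) * (1 - t))
          ^ (d - 1)) ≤
      ∫ t in (0 : ℝ)..1, t * r t ^ (d - 1) :=
  linearize_concave_profile_general hd r hconc hnn
end

section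
/- Let d ≥ 2 and let r : [0, 1] → ℝ be a nonnegative concave function. Then ∫_{1/(d+1)}^{1} r(t)^{d−1} dt ≥ (1/e)·∫₀¹ r(t)^{d−1} dt. -/
open MeasureTheory Set intervalIntegral

/-!
The affine contraction `s ↦ θ s + (1 - θ)` maps `[0, 1]` onto the tail `[1 - θ, 1]`, and for a
nonnegative concave `r` concavity towards the endpoint `1` gives `r (θ s + (1 - θ)) ≥ θ r s`.
Changing variables, `∫_{1-θ}^1 r^n ≥ θ^(n+1) ∫_0^1 r^n`. With `θ = d/(d+1)` and `n = d - 1` the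
factor is `(1 + 1/d)^(-d) ≥ e⁻¹`.
-/

lemma ConcaveOn.mul_apply_le_apply_convex_combination {E : Type*} [AddCommGroup E] [Module ℝ E]
    {s : Set E} {f : E → ℝ} (hf : ConcaveOn ℝ s f) {x y : E} (hx : x ∈ s) (hy : y ∈ s)
    (hfy : 0 ≤ f y) {θ : ℝ} (hθ₀ : 0 ≤ θ) (hθ₁ : θ ≤ 1) :
    θ * f x ≤ f (θ • x + (1 - θ) • y) := by
  have h := hf.2 hx hy hθ₀ (sub_nonneg.2 hθ₁) (add_sub_cancel θ 1)
  rw [smul_eq_mul, smul_eq_mul] at h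
  nlinarith

namespace ConcaveOn

variable {f : ℝ → ℝ} {a b : ℝ}

lemma apply_le_two_mul_apply_midpoint (hf : ConcaveOn ℝ (Icc a b) f)
    (hnn : ∀ t ∈ Icc a b, 0 ≤ f t) {t : ℝ} (ht : t ∈ Icc a b) :
    f t ≤ 2 * f ((a + b) / 2) := by
  have ht' : a + b - t ∈ Icc a b := ⟨by linarith [ht.2], by linarith [ht.1]⟩
  have h := hf.2 ht ht' (by norm_num : (0 : ℝ) ≤ 1 / 2) (by norm_num : (0 : ℝ) ≤ 1 / 2)
    (by norm_num)
  simp only [smul_eq_mul] at h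
  rw [show 1 / 2 * t + 1 / 2 * (a + b - t) = (a + b) / 2 by ring] at h
  linarith [hnn _ ht']

lemma intervalIntegrable_pow_s17 (hf : ConcaveOn ℝ (Icc a b) f) (hnn : ∀ t ∈ Icc a b, 0 ≤ f t)
    (hab : a ≤ b) (n : ℕ) : IntervalIntegrable (fun t ↦ f t ^ n) volume a b := by
  rw [intervalIntegrable_iff_integrableOn_Ioo_of_le hab]
  have hcont : ContinuousOn (fun t ↦ f t ^ n) (Ioo a b) :=
    ((hf.subset Ioo_subset_Icc_self (convex_Ioo a b)).continuousOn isOpen_Ioo).pow n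
  refine .of_bound measure_Ioo_lt_top (hcont.aestronglyMeasurable measurableSet_Ioo)
    ((2 * f ((a + b) / 2)) ^ n) ?_
  filter_upwards [ae_restrict_mem measurableSet_Ioo] with t ht
  have ht' : t ∈ Icc a b := Ioo_subset_Icc_self ht
  rw [Real.norm_eq_abs, abs_of_nonneg (pow_nonneg (hnn t ht') n)]
  exact pow_le_pow_left₀ (hnn t ht') (hf.apply_le_two_mul_apply_midpoint hnn ht') n

lemma pow_succ_mul_integral_pow_le_integral_pow_tail (hf : ConcaveOn ℝ (Icc 0 1) f)
    (hnn : ∀ t ∈ Icc (0 : ℝ) 1, 0 ≤ f t) {θ : ℝ} (hθ₀ : 0 < θ) (hθ₁ : θ ≤ 1) (n : ℕ) :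
    θ ^ (n + 1) * ∫ t in (0 : ℝ)..1, f t ^ n ≤ ∫ t in (1 - θ)..1, f t ^ n := by
  have hpoint : ∀ s ∈ Icc (0 : ℝ) 1, θ ^ n * f s ^ n ≤ f (θ * s + (1 - θ)) ^ n := by
    intro s hs
    have h := hf.mul_apply_le_apply_convex_combination hs (right_mem_Icc.2 zero_le_one)
      (hnn 1 (right_mem_Icc.2 zero_le_one)) hθ₀.le hθ₁
    simp only [smul_eq_mul, mul_one] at h
    rw [← mul_pow]
    exact pow_le_pow_left₀ (mul_nonneg hθ₀.le (hnn s hs)) h n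
  have hint : IntervalIntegrable (fun t ↦ f t ^ n) volume 0 1 :=
    hf.intervalIntegrable_pow_s17 hnn zero_le_one n
  have hint_tail : IntervalIntegrable (fun s ↦ f (θ * s + (1 - θ)) ^ n) volume 0 1 := by
    have htail : ConcaveOn ℝ (Icc (1 - θ) 1) f :=
      hf.subset (Icc_subset_Icc (by linarith) le_rfl) (convex_Icc _ _)
    have h := (htail.intervalIntegrable_pow_s17 (fun t ht ↦ hnn t ⟨by linarith [ht.1], ht.2⟩)
      (by linarith) n).comp_add_right (1 - θ) |>.comp_mul_left (c := θ)
    simpa [hθ₀.ne'] using h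
  have hsubst : ∫ t in (1 - θ)..1, f t ^ n = θ * ∫ s in (0 : ℝ)..1, f (θ * s + (1 - θ)) ^ n := by
    rw [integral_comp_mul_add (fun t ↦ f t ^ n) hθ₀.ne', smul_eq_mul, mul_inv_cancel_left₀ hθ₀.ne']
    simp
  calc θ ^ (n + 1) * ∫ t in (0 : ℝ)..1, f t ^ n
      = θ * ∫ s in (0 : ℝ)..1, θ ^ n * f s ^ n := by
        rw [intervalIntegral.integral_const_mul, pow_succ', mul_assoc]
    _ ≤ θ * ∫ s in (0 : ℝ)..1, f (θ * s + (1 - θ)) ^ n := by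
      gcongr
      exact integral_mono_on zero_le_one (hint.const_mul _) hint_tail hpoint
    _ = ∫ t in (1 - θ)..1, f t ^ n := hsubst.symm

end ConcaveOn

lemma Real.inv_exp_one_le_div_add_one_pow (n : ℕ) : (Real.exp 1)⁻¹ ≤ ((n : ℝ) / (n + 1)) ^ n := by
  have h : ((n : ℝ) / (n + 1)) ^ n = ((1 + (n : ℝ)⁻¹) ^ n)⁻¹ := by
    rcases n.eq_zero_or_pos with rfl | _
    · simp
    · rw [← inv_pow]; congr 1; field_simp
  rw [h]
  exact inv_anti₀ (by positivity) Real.one_add_inv_pow_le_exp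

/-- For a nonnegative concave function `r` on `[0,1]`, the integral of `r^{d-1}` over
`[1/(d+1), 1]` is at least a `1/e` fraction of its integral over `[0,1]`. -/
theorem concave_tail_integral {d : ℕ} (hd : 2 ≤ d) (r : ℝ → ℝ)
    (hconc : ConcaveOn ℝ (Icc 0 1) r)
    (hnn : ∀ t ∈ Icc (0 : ℝ) 1, 0 ≤ r t) :
    (Real.exp 1)⁻¹ * ∫ t in (0 : ℝ)..1, r t ^ (d - 1) ≤
      ∫ t in (1 / ((d : ℝ) + 1))..1, r t ^ (d - 1) := by
  have hd₀ : (0 : ℝ) < d := by norm_cast; omega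
  have htail : 1 - (d : ℝ) / (d + 1) = 1 / (d + 1) := by field_simp; ring
  have hθ₁ : (d : ℝ) / (d + 1) ≤ 1 := (div_le_one (by positivity)).2 (by linarith)
  have hint_nonneg : 0 ≤ ∫ t in (0 : ℝ)..1, r t ^ (d - 1) :=
    integral_nonneg zero_le_one fun t ht ↦ pow_nonneg (hnn t ht) _
  calc (Real.exp 1)⁻¹ * ∫ t in (0 : ℝ)..1, r t ^ (d - 1)
      ≤ ((d : ℝ) / (d + 1)) ^ (d - 1 + 1) * ∫ t in (0 : ℝ)..1, r t ^ (d - 1) := by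
        rw [Nat.sub_add_cancel (by omega)]
        exact mul_le_mul_of_nonneg_right (Real.inv_exp_one_le_div_add_one_pow d) hint_nonneg
    _ ≤ ∫ t in (1 - (d : ℝ) / (d + 1))..1, r t ^ (d - 1) :=
        hconc.pow_succ_mul_integral_pow_le_integral_pow_tail hnn (by positivity) hθ₁ _
    _ = ∫ t in (1 / ((d : ℝ) + 1))..1, r t ^ (d - 1) := by rw [htail]
end
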